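/- arXiv:2511.09115 — 4 statements merged into one kernel-verified Lean document; each statement's English description precedes it below -/
import Mathlib

section
/- Let E be a Hausdorff topological space and f : [0,1] → E a function admitting a continuous extension to the split interval Î (where [0,1] is embedded as {t+}). Then f is càdlàg: f is right-continuous on [0,1) and has left limits at every t ∈ (0,1], and moreover the value of the extension at t− equals the left limit lim_{s↑t} f(s). -/
open Set Filter Topology

/-- Points of the split interval: pairs (t, b) with lexicographic order,
where `b = false` represents `t−` and `b = true` represents `t+`. -/
abbrev SIP := ℝ ×ₗ Bool

/-- The split interval Î = {t− : t ∈ (0,1]} ∪ {t+ : t ∈ [0,1]}. -/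
def SI : Type := {p : SIP // (ofLex p).1 ∈ Set.Icc (0:ℝ) 1 ∧ ((ofLex p).1 = 0 → (ofLex p).2 = true)}

noncomputable instance : LinearOrder SI := Subtype.instLinearOrder _
noncomputable instance : TopologicalSpace SI := Preorder.topology SI
instance : OrderTopology SI := ⟨rfl⟩

/-- The point `t+` of the split interval, for `t ∈ [0,1]`. -/
def siPlus (t : ℝ) (ht : t ∈ Set.Icc (0:ℝ) 1) : SI :=
  ⟨toLex (t, true), ht, fun _ => rfl⟩

/-- The point `t−` of the split interval, for `t ∈ (0,1]`. -/
def siMinus (t : ℝ) (ht : t ∈ Set.Ioc (0:ℝ) 1) : SI :=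
  ⟨toLex (t, false), ⟨ht.1.le, ht.2⟩, fun h => absurd h ht.1.ne'⟩

/-
Extended constantly outside `[0,1]`, the embedding `s ↦ s+` is a map `ℝ → Î` through which `F`
recovers `f` on `[0,1]`, so it suffices that `s+ → t+` as `s ↓ t` and `s+ → t−` as `s ↑ t`. In the
order topology this comes down to two observations: for `s > t` (resp. `s < t`) we already have
`t+ < s+` (resp. `s+ < t−`), and a point above `t+` or below `t−` has real coordinate strictly
beyond `t`, so it is not reached by `s+` for `s` close enough to `t`.
-/

namespace SI

def proj (x : SI) : ℝ := (ofLex x.val).1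

theorem lt_iff {x y : SI} :
    x < y ↔ x.proj < y.proj ∨ x.proj = y.proj ∧ (ofLex x.val).2 < (ofLex y.val).2 :=
  Prod.Lex.lt_iff

end SI

theorem siPlus_lt_iff {s : ℝ} (hs : s ∈ Icc (0:ℝ) 1) (x : SI) :
    siPlus s hs < x ↔ s < x.proj := by
  rw [SI.lt_iff]
  simp [siPlus, SI.proj]

theorem lt_siMinus_iff {t : ℝ} (ht : t ∈ Ioc (0:ℝ) 1) (x : SI) :
    x < siMinus t ht ↔ x.proj < t := by
  rw [SI.lt_iff]
  simp [siMinus, SI.proj]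

theorem lt_siPlus_of_proj_lt {s : ℝ} (hs : s ∈ Icc (0:ℝ) 1) {x : SI} (h : x.proj < s) :
    x < siPlus s hs :=
  SI.lt_iff.2 (Or.inl h)

noncomputable def siPlusExtend : ℝ → SI :=
  IccExtend zero_le_one fun u => siPlus u u.2

theorem siPlusExtend_of_mem {s : ℝ} (hs : s ∈ Icc (0:ℝ) 1) : siPlusExtend s = siPlus s hs :=
  IccExtend_of_mem _ _ hs

theorem tendsto_siPlusExtend_nhdsGT {t : ℝ} (ht : t ∈ Ico (0:ℝ) 1) :
    Tendsto siPlusExtend (𝓝[>] t) (𝓝 (siPlus t (Ico_subset_Icc_self ht))) := by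
  have hIcc : ∀ᶠ s in 𝓝[>] t, s ∈ Icc (0:ℝ) 1 := Icc_mem_nhdsGT_of_mem ht
  refine tendsto_order.2 ⟨fun a ha => ?_, fun a ha => ?_⟩
  · filter_upwards [hIcc, self_mem_nhdsWithin] with s hs hts
    rw [siPlusExtend_of_mem hs]
    exact ha.trans ((siPlus_lt_iff _ _).2 hts)
  · have hta : t < a.proj := (siPlus_lt_iff _ _).1 ha
    filter_upwards [hIcc, Ioo_mem_nhdsGT hta] with s hs hsa
    rw [siPlusExtend_of_mem hs]
    exact (siPlus_lt_iff _ _).2 hsa.2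

theorem tendsto_siPlusExtend_nhdsLT {t : ℝ} (ht : t ∈ Ioc (0:ℝ) 1) :
    Tendsto siPlusExtend (𝓝[<] t) (𝓝 (siMinus t ht)) := by
  have hIcc : ∀ᶠ s in 𝓝[<] t, s ∈ Icc (0:ℝ) 1 := Icc_mem_nhdsLT_of_mem ht
  refine tendsto_order.2 ⟨fun a ha => ?_, fun a ha => ?_⟩
  · have hat : a.proj < t := (lt_siMinus_iff _ _).1 ha
    filter_upwards [hIcc, Ioo_mem_nhdsLT hat] with s hs has
    rw [siPlusExtend_of_mem hs]
    exact lt_siPlus_of_proj_lt hs has.1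
  · filter_upwards [hIcc, self_mem_nhdsWithin] with s hs hst
    rw [siPlusExtend_of_mem hs]
    exact ((lt_siMinus_iff _ _).2 hst).trans ha

theorem cadlag_of_continuous_splitInterval_extension_general {E : Type*} [TopologicalSpace E]
    (F : SI → E) (hF : Continuous F) (f : ℝ → E)
    (hf : ∀ t (ht : t ∈ Set.Icc (0:ℝ) 1), f t = F (siPlus t ht)) :
    (∀ t ∈ Set.Ico (0:ℝ) 1, Tendsto f (𝓝[>] t) (𝓝 (f t))) ∧
    (∀ t (ht : t ∈ Set.Ioc (0:ℝ) 1), Tendsto f (𝓝[<] t) (𝓝 (F (siMinus t ht)))) := by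
  have hf_eq : ∀ {l : Filter ℝ}, (∀ᶠ s in l, s ∈ Icc (0:ℝ) 1) → F ∘ siPlusExtend =ᶠ[l] f :=
    fun hl => hl.mono fun s hs => by rw [Function.comp_apply, siPlusExtend_of_mem hs, hf s hs]
  refine ⟨fun t ht => ?_, fun t ht => ?_⟩
  · rw [hf t (Ico_subset_Icc_self ht)]
    exact ((hF.tendsto _).comp (tendsto_siPlusExtend_nhdsGT ht)).congr'
      (hf_eq (Icc_mem_nhdsGT_of_mem ht))
  · exact ((hF.tendsto _).comp (tendsto_siPlusExtend_nhdsLT ht)).congr'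
      (hf_eq (Icc_mem_nhdsLT_of_mem ht))

/-- If `E` is Hausdorff and `f : [0,1] → E` admits a continuous extension `F` to the split
interval (with `[0,1]` embedded as the points `t+`), then `f` is càdlàg: right-continuous
on `[0,1)` with left limits at every `t ∈ (0,1]`, and the value of `F` at `t−` is the left
limit of `f` at `t`. -/
theorem cadlag_of_continuous_splitInterval_extension {E : Type*} [TopologicalSpace E]
    [T2Space E] (F : SI → E) (hF : Continuous F) (f : ℝ → E)
    (hf : ∀ t (ht : t ∈ Set.Icc (0:ℝ) 1), f t = F (siPlus t ht)) :
    (∀ t ∈ Set.Ico (0:ℝ) 1, Tendsto f (𝓝[>] t) (𝓝 (f t))) ∧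
    (∀ t (ht : t ∈ Set.Ioc (0:ℝ) 1), Tendsto f (𝓝[<] t) (𝓝 (F (siMinus t ht)))) :=
  cadlag_of_continuous_splitInterval_extension_general F hF f hf
end

section
/- Let E be a regular (T₃) topological space and f : [0,1] → E a càdlàg function. Then f admits a unique continuous extension to the split interval Î, and this extension is given by f(t+) = f(t) and f(t−) = lim_{s↑t} f(s). -/
/-!
Take `F (t+) = f t` and `F (t−) = g t`. In `Î` the interval `(l+, u+)` consists of the points
over `(l, u)` together with `u−`; if `f` maps `(l, u)` into a closed set `V`, then so does `F` on
that interval, because every left limit `g a` with `a ∈ (l, u]` is a limit of values of `f` in `V`.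
Regularity of `E` gives closed neighbourhood bases, so right continuity of `f` yields continuity
of `F` at `t+` (which is isolated from the left) and the left limits yield continuity at `t−`.
Conversely `s+ → t−` as `s ↑ t`, so any continuous extension takes the value
`lim_{s↑t} f s = g t` at `t−`.
-/

open Set Filter Topology

namespace SI

lemma induction {P : SI → Prop}
    (h : ∀ a c (ha : a ∈ Icc (0 : ℝ) 1) (ha0 : a = 0 → c = true), P ⟨toLex (a, c), ha, ha0⟩)
    (q : SI) : P q := by
  obtain ⟨p, hp⟩ := q
  obtain ⟨⟨a, c⟩, rfl⟩ := toLex.surjective p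
  exact h a c hp.1 hp.2

lemma mk_lt_mk_iff {a b : ℝ} {c d : Bool} {ha hb} :
    (⟨toLex (a, c), ha⟩ : SI) < ⟨toLex (b, d), hb⟩ ↔ a < b ∨ (a = b ∧ c = false ∧ d = true) := by
  rw [Subtype.mk_lt_mk, Prod.Lex.lt_iff]
  simp [Bool.lt_iff]

lemma siPlus_or_siMinus (q : SI) : (∃ t ht, q = siPlus t ht) ∨ ∃ t ht, q = siMinus t ht := by
  induction q using SI.induction with | h t c ht ht0 => ?_
  cases c
  · exact Or.inr ⟨t, ⟨ht.1.lt_of_ne fun h => by simp [← h] at ht0, ht.2⟩, rfl⟩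
  · exact Or.inl ⟨t, ht, rfl⟩

lemma siPlus_zero_le (q : SI) : siPlus 0 ⟨le_rfl, zero_le_one⟩ ≤ q := by
  induction q using SI.induction with | h a c ha ha0 => ?_
  refine not_lt.1 fun h => ?_
  rcases mk_lt_mk_iff.1 h with h | ⟨rfl, rfl, -⟩
  · exact h.not_ge ha.1
  · simp at ha0

lemma le_siPlus_one (q : SI) : q ≤ siPlus 1 ⟨zero_le_one, le_rfl⟩ := by
  induction q using SI.induction with | h a c ha => ?_
  refine not_lt.1 fun h => ?_
  rcases mk_lt_mk_iff.1 h with h | ⟨-, h, -⟩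
  · exact h.not_ge ha.2
  · simp at h

lemma siPlus_le_of_siMinus_lt {t : ℝ} (ht : t ∈ Ioc (0 : ℝ) 1) {q : SI}
    (hq : siMinus t ht < q) : siPlus t (Ioc_subset_Icc_self ht) ≤ q := by
  induction q using SI.induction with | h a c => ?_
  refine not_lt.1 fun h => ?_
  rcases mk_lt_mk_iff.1 hq with hq | ⟨rfl, -, rfl⟩ <;> rcases mk_lt_mk_iff.1 h with h | h
  all_goals first | linarith | simp_all

lemma Ici_siPlus_mem_nhds (t : ℝ) (ht : t ∈ Icc (0 : ℝ) 1) :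
    Ici (siPlus t ht) ∈ 𝓝 (siPlus t ht) := by
  rcases ht.1.eq_or_lt with rfl | ht0
  · exact mem_of_superset univ_mem fun q _ => siPlus_zero_le q
  · exact mem_of_superset (Ioi_mem_nhds (mk_lt_mk_iff.2 (Or.inr ⟨rfl, rfl, rfl⟩)))
      fun q => siPlus_le_of_siMinus_lt ⟨ht0, ht.2⟩

variable {E : Type*} [TopologicalSpace E] {f g : ℝ → E}

def extend (f g : ℝ → E) (p : SI) : E :=
  if (ofLex p.1).2 then f (ofLex p.1).1 else g (ofLex p.1).1

lemma mapsTo_extend_Ioo (hl : ∀ t ∈ Ioc (0 : ℝ) 1, Tendsto f (𝓝[<] t) (𝓝 (g t)))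
    {V : Set E} (hV : IsClosed V) {l u : ℝ} (hl₀ : l ∈ Icc (0 : ℝ) 1) (hu : u ∈ Icc (0 : ℝ) 1)
    (hfV : MapsTo f (Ioo l u) V) : MapsTo (extend f g) (Ioo (siPlus l hl₀) (siPlus u hu)) V := by
  intro q hq
  induction q using SI.induction with | h a c ha => ?_
  obtain ⟨hlq, hqu⟩ := hq
  have hla : l < a := by simpa using mk_lt_mk_iff.1 hlq
  cases c
  · have hau : a ≤ u := by rcases mk_lt_mk_iff.1 hqu with h | h; exacts [h.le, h.1.le]
    refine hV.mem_of_tendsto (hl a ⟨hl₀.1.trans_lt hla, ha.2⟩) ?_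
    filter_upwards [Ioo_mem_nhdsLT hla] with s hs
    exact hfV ⟨hs.1, hs.2.trans_le hau⟩
  · exact hfV ⟨hla, by simpa using mk_lt_mk_iff.1 hqu⟩

lemma continuousAt_extend_siMinus [RegularSpace E]
    (hl : ∀ t ∈ Ioc (0 : ℝ) 1, Tendsto f (𝓝[<] t) (𝓝 (g t))) (t : ℝ) (ht : t ∈ Ioc (0 : ℝ) 1) :
    ContinuousAt (extend f g) (siMinus t ht) := by
  refine (closed_nhds_basis (g t)).tendsto_right_iff.2 fun V ⟨hV, hVc⟩ => ?_
  obtain ⟨l, hlt, hlV⟩ := mem_nhdsLT_iff_exists_Ioo_subset.1 ((hl t ht).eventually hV)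
  have hl₀ : max l 0 ∈ Icc (0 : ℝ) 1 := ⟨le_max_right _ _, (max_lt hlt ht.1).le.trans ht.2⟩
  refine mem_of_superset (Ioo_mem_nhds (a := siPlus _ hl₀) (b := siPlus t (Ioc_subset_Icc_self ht))
    (mk_lt_mk_iff.2 (Or.inl (max_lt hlt ht.1))) (mk_lt_mk_iff.2 (Or.inr ⟨rfl, rfl, rfl⟩)))
    (mapsTo_extend_Ioo hl hVc hl₀ _ fun s hs => hlV ⟨(le_max_left _ _).trans_lt hs.1, hs.2⟩)

lemma continuousAt_extend_siPlus [RegularSpace E]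
    (hr : ∀ t ∈ Ico (0 : ℝ) 1, Tendsto f (𝓝[>] t) (𝓝 (f t)))
    (hl : ∀ t ∈ Ioc (0 : ℝ) 1, Tendsto f (𝓝[<] t) (𝓝 (g t))) (t : ℝ) (ht : t ∈ Icc (0 : ℝ) 1) :
    ContinuousAt (extend f g) (siPlus t ht) := by
  refine (closed_nhds_basis (f t)).tendsto_right_iff.2 fun V ⟨hV, hVc⟩ => ?_
  rcases ht.2.lt_or_eq with ht1 | rfl
  · obtain ⟨u, htu, huV⟩ := mem_nhdsGT_iff_exists_Ioo_subset.1 ((hr t ⟨ht.1, ht1⟩).eventually hV)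
    have hu : min u 1 ∈ Icc (0 : ℝ) 1 := ⟨ht.1.trans (lt_min htu ht1).le, min_le_right _ _⟩
    filter_upwards [Ici_siPlus_mem_nhds t ht,
      Iio_mem_nhds (mk_lt_mk_iff.2 (Or.inl (lt_min htu ht1)) : siPlus t ht < siPlus _ hu)]
      with q htq hqu
    rcases (show siPlus t ht ≤ q from htq).eq_or_lt with rfl | htq
    · exact mem_of_mem_nhds hV
    · exact mapsTo_extend_Ioo hl hVc ht hu
        (fun s hs => huV ⟨hs.1, hs.2.trans_le (min_le_left _ _)⟩) ⟨htq, hqu⟩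
  · filter_upwards [Ici_siPlus_mem_nhds 1 ht] with q hq
    rw [le_antisymm (le_siPlus_one q) hq]
    exact mem_of_mem_nhds hV

theorem continuous_extend [RegularSpace E]
    (hr : ∀ t ∈ Ico (0 : ℝ) 1, Tendsto f (𝓝[>] t) (𝓝 (f t)))
    (hl : ∀ t ∈ Ioc (0 : ℝ) 1, Tendsto f (𝓝[<] t) (𝓝 (g t))) : Continuous (extend f g) := by
  refine continuous_iff_continuousAt.2 fun q => ?_
  rcases siPlus_or_siMinus q with ⟨t, ht, rfl⟩ | ⟨t, ht, rfl⟩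
  exacts [continuousAt_extend_siPlus hr hl t ht, continuousAt_extend_siMinus hl t ht]

noncomputable def projPlus (s : ℝ) : SI :=
  siPlus (projIcc 0 1 zero_le_one s) (projIcc 0 1 zero_le_one s).2

lemma projPlus_of_mem {s : ℝ} (hs : s ∈ Icc (0 : ℝ) 1) : projPlus s = siPlus s hs :=
  Subtype.ext (by simp [projPlus, siPlus, projIcc_of_mem _ hs])

lemma tendsto_projPlus_nhdsLT (t : ℝ) (ht : t ∈ Ioc (0 : ℝ) 1) :
    Tendsto projPlus (𝓝[<] t) (𝓝 (siMinus t ht)) := by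
  refine tendsto_order.2 ⟨fun q hlt => ?_, fun q hq => ?_⟩
  · induction q using SI.induction with | h a c => ?_
    have hat : a < t := by
      rcases mk_lt_mk_iff.1 hlt with h | h; exacts [h, by simp at h]
    filter_upwards [Ioo_mem_nhdsLT (max_lt hat ht.1)] with s hs
    rw [projPlus_of_mem ⟨(le_max_right _ _).trans hs.1.le, hs.2.le.trans ht.2⟩]
    exact mk_lt_mk_iff.2 (Or.inl ((le_max_left _ _).trans_lt hs.1))
  · filter_upwards [Ioo_mem_nhdsLT ht.1] with s hs
    rw [projPlus_of_mem ⟨hs.1.le, hs.2.le.trans ht.2⟩]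
    exact (mk_lt_mk_iff.2 (Or.inl hs.2)).trans hq

lemma apply_siMinus_eq_of_continuous [T2Space E]
    (hl : ∀ t ∈ Ioc (0 : ℝ) 1, Tendsto f (𝓝[<] t) (𝓝 (g t))) {F : SI → E} (hF : Continuous F)
    (hFf : ∀ t (ht : t ∈ Icc (0 : ℝ) 1), F (siPlus t ht) = f t) (t : ℝ) (ht : t ∈ Ioc (0 : ℝ) 1) :
    F (siMinus t ht) = g t := by
  refine tendsto_nhds_unique
    (((hF.tendsto _).comp (tendsto_projPlus_nhdsLT t ht)).congr' ?_) (hl t ht)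
  filter_upwards [Ioo_mem_nhdsLT ht.1] with s hs
  have hs : s ∈ Icc (0 : ℝ) 1 := ⟨hs.1.le, hs.2.le.trans ht.2⟩
  simp [projPlus_of_mem hs, hFf s hs]

lemma eq_extend_of_continuous [T2Space E]
    (hl : ∀ t ∈ Ioc (0 : ℝ) 1, Tendsto f (𝓝[<] t) (𝓝 (g t))) {F : SI → E} (hF : Continuous F)
    (hFf : ∀ t (ht : t ∈ Icc (0 : ℝ) 1), F (siPlus t ht) = f t) : F = extend f g := by
  funext q
  rcases siPlus_or_siMinus q with ⟨t, ht, rfl⟩ | ⟨t, ht, rfl⟩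
  exacts [hFf t ht, apply_siMinus_eq_of_continuous hl hF hFf t ht]

end SI

/-- If `E` is regular (T₃) and `f : [0,1] → E` is càdlàg, with left limits `g t` at each
`t ∈ (0,1]`, then `f` admits a unique continuous extension to the split interval, and
this extension sends `t+` to `f t` and `t−` to `g t`. -/
theorem splitInterval_extension_existsUnique {E : Type*} [TopologicalSpace E] [T3Space E]
    (f g : ℝ → E)
    (hr : ∀ t ∈ Set.Ico (0:ℝ) 1, Tendsto f (𝓝[>] t) (𝓝 (f t)))
    (hl : ∀ t ∈ Set.Ioc (0:ℝ) 1, Tendsto f (𝓝[<] t) (𝓝 (g t))) :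
    (∃! F : SI → E, Continuous F ∧ ∀ t (ht : t ∈ Set.Icc (0:ℝ) 1), F (siPlus t ht) = f t) ∧
    (∀ F : SI → E,
      (Continuous F ∧ ∀ t (ht : t ∈ Set.Icc (0:ℝ) 1), F (siPlus t ht) = f t) →
      ∀ t (ht : t ∈ Set.Ioc (0:ℝ) 1), F (siMinus t ht) = g t) :=
  ⟨⟨SI.extend f g, ⟨SI.continuous_extend hr hl, fun _ _ => rfl⟩,
      fun _ hF => SI.eq_extend_of_continuous hl hF.1 hF.2⟩,
    fun _ hF => SI.apply_siMinus_eq_of_continuous hl hF.1 hF.2⟩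
end

section
/- With f : [0,1] → ℝ_K as above (f(0)=f(1)=0, f(t) = (t+1/n)/2 on [1/(n+1), 1/n)), the natural extension of f to the split interval Î, given by f(t+) = f(t) and f(t−) = left limit, is not continuous at the point 0+: the points (1/n)− converge to 0+ in Î but f((1/n)−) = 1/n does not converge to f(0) = 0 in the K-topology. -/
open Set Filter Topology

/-- The set K = {1/n : n ∈ ℕ, n ≥ 1}. -/
def KSet : Set ℝ := {x | ∃ n : ℕ, 0 < n ∧ x = 1 / (n : ℝ)}

/-- The K-topology (Smirnov deleted sequence topology) on ℝ. -/
def Ktop : TopologicalSpace ℝ :=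
  TopologicalSpace.generateFrom {s | ∃ U H : Set ℝ, IsOpen U ∧ H ⊆ KSet ∧ s = U \ H}

/-!
The points `(1/n)−` decrease to `0+ = min Î`, so they converge to `0+`. Since the K-topology is
finer than the usual one, the left limit of `f` at `1/n` in it can only be the usual left limit
`1/n`. But `ℝ \ K` is a K-neighbourhood of `0 = f(0)` that contains none of the values `1/n`.
-/

lemma siPlus_zero_le (x : SI) : siPlus 0 (by norm_num) ≤ x := by
  obtain ⟨⟨t, b⟩, ⟨ht0, -⟩, hb⟩ := x
  rcases ht0.lt_or_eq with ht | rfl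
  · exact (Prod.Lex.lt_iff.2 (Or.inl ht)).le
  · cases hb rfl
    exact le_rfl

lemma siPlus_zero_lt_iff (x : SI) : siPlus 0 (by norm_num) < x ↔ 0 < (ofLex x.1).1 := by
  obtain ⟨⟨t, b⟩, -, hb⟩ := x
  change toLex ((0 : ℝ), true) < toLex (t, b) ↔ 0 < t
  rw [Prod.Lex.toLex_lt_toLex]
  constructor
  · rintro (h | ⟨rfl, h⟩)
    · exact h
    · exact absurd h (by simp [Bool.lt_iff])
  · exact Or.inl

lemma siMinus_lt_of_lt {t : ℝ} (ht : t ∈ Ioc 0 1) {x : SI} (h : t < (ofLex x.1).1) :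
    siMinus t ht < x :=
  Prod.Lex.lt_iff.2 (Or.inl h)

lemma tendsto_siMinus_siPlus_zero {α : Type*} {l : Filter α} {t : α → ℝ}
    (ht : ∀ a, t a ∈ Ioc 0 1) (hlim : Tendsto t l (𝓝 0)) :
    Tendsto (fun a => siMinus (t a) (ht a)) l (𝓝 (siPlus 0 (by norm_num))) := by
  refine tendsto_order.2 ⟨fun x hx => absurd (siPlus_zero_le x) (not_le.2 hx), fun x hx => ?_⟩
  filter_upwards [hlim.eventually (gt_mem_nhds ((siPlus_zero_lt_iff x).1 hx))] with a ha
  exact siMinus_lt_of_lt (ht a) ha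

lemma Ktop_le_instTopologicalSpace : Ktop ≤ (inferInstance : TopologicalSpace ℝ) :=
  fun s hs =>
    TopologicalSpace.GenerateOpen.basic s ⟨s, ∅, hs, empty_subset _, sdiff_empty.symm⟩

lemma isOpen_Ktop_diff {U H : Set ℝ} (hU : IsOpen U) (hH : H ⊆ KSet) : IsOpen[Ktop] (U \ H) :=
  TopologicalSpace.GenerateOpen.basic _ ⟨U, H, hU, hH, rfl⟩

lemma zero_notMem_KSet : (0 : ℝ) ∉ KSet := by
  rintro ⟨n, hn, h0⟩
  exact (one_div_pos.2 (Nat.cast_pos.2 hn)).ne' h0.symm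

lemma compl_KSet_mem_Ktop_nhds_zero : KSetᶜ ∈ @nhds ℝ Ktop 0 := by
  rw [compl_eq_univ_sdiff]
  exact @IsOpen.mem_nhds ℝ Ktop _ _ (isOpen_Ktop_diff isOpen_univ subset_rfl)
    ⟨mem_univ 0, zero_notMem_KSet⟩

lemma not_tendsto_Ktop_zero_of_eventually_mem_KSet {α : Type*} {l : Filter α} [l.NeBot]
    {u : α → ℝ} (hu : ∀ᶠ a in l, u a ∈ KSet) : ¬ Tendsto u l (@nhds ℝ Ktop 0) :=
  fun h =>    (hu.and (h compl_KSet_mem_Ktop_nhds_zero)).exists.elim fun _ ha => ha.2 ha.1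

lemma one_div_succ_mem_Ioc (n : ℕ) : 1 / ((n : ℝ) + 1) ∈ Ioc 0 1 :=
  ⟨by positivity, (div_le_one (by positivity)).2 (by simp)⟩

lemma one_div_succ_mem_KSet (n : ℕ) : 1 / ((n : ℝ) + 1) ∈ KSet :=
  ⟨n + 1, n.succ_pos, by push_cast; rfl⟩

lemma tendsto_nhdsLT_one_div_succ {f : ℝ → ℝ}
    (hfn : ∀ n : ℕ, 0 < n → ∀ t ∈ Ico (1 / ((n : ℝ) + 1)) (1 / (n : ℝ)),
      f t = (t + 1 / (n : ℝ)) / 2) (n : ℕ) :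
    Tendsto f (𝓝[<] (1 / ((n : ℝ) + 1))) (𝓝 (1 / ((n : ℝ) + 1))) := by
  set t : ℝ := 1 / ((n : ℝ) + 1)
  have hpiece : ∀ s ∈ Ico (1 / ((n : ℝ) + 2)) t, (s + t) / 2 = f s := fun s hs => by
    have := hfn (n + 1) n.succ_pos s (by push_cast; rwa [add_assoc, one_add_one_eq_two])
    push_cast at this
    exact this.symm
  have hbelow : 1 / ((n : ℝ) + 2) < t :=
    one_div_lt_one_div_of_lt (by positivity) (by linarith)
  have hlin : Tendsto (fun s => (s + t) / 2) (𝓝[<] t) (𝓝 t) := by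
    have := ((continuous_add_const t).div_const 2).tendsto t
    rw [add_self_div_two] at this
    exact this.mono_left nhdsWithin_le_nhds
  exact hlin.congr' (eventually_of_mem (Ico_mem_nhdsLT hbelow) hpiece)

/-- For `f` as in the example (`f 0 = f 1 = 0`, `f t = (t + 1/n)/2` on `[1/(n+1), 1/n)`),
with left limits `g` in the K-topology, the natural extension of `f` to the split
interval (`t+ ↦ f t`, `t− ↦ g t`) is not continuous at `0+`: the points `(1/(n+1))−`
converge to `0+` in the split interval, but the left limits `g (1/(n+1)) = 1/(n+1)` do
not converge to `f 0 = 0` in the K-topology. -/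
theorem splitInterval_extension_into_Ktop_not_continuous (f g : ℝ → ℝ)
    (hf0 : f 0 = 0)
    (hfn : ∀ n : ℕ, 0 < n → ∀ t ∈ Set.Ico (1 / ((n : ℝ) + 1)) (1 / (n : ℝ)),
      f t = (t + 1 / (n : ℝ)) / 2)
    (hg : ∀ t ∈ Set.Ioc (0:ℝ) 1, Tendsto f (𝓝[<] t) (@nhds ℝ Ktop (g t))) :
    Tendsto (fun n : ℕ => siMinus (1 / ((n : ℝ) + 1))
        ⟨by positivity, by
          rw [div_le_one (by positivity)]
          have := (Nat.cast_nonneg n : (0:ℝ) ≤ n); linarith⟩)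
      atTop (𝓝 (siPlus 0 (by norm_num))) ∧
    (∀ n : ℕ, g (1 / ((n : ℝ) + 1)) = 1 / ((n : ℝ) + 1)) ∧
    ¬ Tendsto (fun n : ℕ => g (1 / ((n : ℝ) + 1))) atTop (@nhds ℝ Ktop (f 0)) ∧
    ¬ @ContinuousAt SI ℝ _ Ktop
      (fun v : SI => if (ofLex v.1).2 = true then f (ofLex v.1).1 else g (ofLex v.1).1)
      (siPlus 0 (by norm_num)) := by
  have hconv := tendsto_siMinus_siPlus_zero one_div_succ_mem_Ioc
    tendsto_one_div_add_atTop_nhds_zero_nat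
  have hleft : ∀ n : ℕ, g (1 / ((n : ℝ) + 1)) = 1 / ((n : ℝ) + 1) := fun n =>
    tendsto_nhds_unique ((hg _ (one_div_succ_mem_Ioc n)).mono_right
      (nhds_mono Ktop_le_instTopologicalSpace)) (tendsto_nhdsLT_one_div_succ hfn n)
  have hdiv : ¬ Tendsto (fun n : ℕ => g (1 / ((n : ℝ) + 1))) atTop (@nhds ℝ Ktop (f 0)) := by
    rw [hf0]
    exact not_tendsto_Ktop_zero_of_eventually_mem_KSet
      (Eventually.of_forall fun n => by rw [hleft n]; exact one_div_succ_mem_KSet n)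
  refine ⟨hconv, hleft, hdiv, fun hcont => hdiv ?_⟩
  -- the extension is `g t` at `t−` and `f 0` at `0+` by definitional unfolding
  exact (@ContinuousAt.tendsto _ _ _ Ktop _ _ hcont).comp hconv
end

section
/- Let E be a completely regular space whose topology is generated by two families of pseudometrics {d_i}_{i∈I} and {ζ_j}_{j∈J}, each separating points and directed under pointwise maxima. Then the families of Skorohod pseudometrics {d̃_i}_{i∈I} and {ζ̃_j}_{j∈J} generate the same topology on the space D([0,1],E) of càdlàg functions into E. In other words, the Skorohod topology on D([0,1],E) depends only on the topology of E, not on the choice of defining pseudometrics. -/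
open Set Filter Topology

/-- A pseudometric on a set `E`: vanishes on the diagonal, symmetric, triangle
inequality (nonnegativity follows). -/
def IsPseudometric {E : Type*} (d : E → E → ℝ) : Prop :=
  (∀ a, d a a = 0) ∧ (∀ a b, d a b = d b a) ∧ (∀ a b c, d a c ≤ d a b + d b c)

/-- The topology on `E` generated by a family of pseudometrics: the coarsest topology
making every map `x ↦ d i a x` continuous. -/
def pseudoTop {E : Type*} {ι : Sort*} (d : ι → E → E → ℝ) : TopologicalSpace E :=
  ⨅ (i : ι) (a : E), TopologicalSpace.induced (fun x => d i a x) inferInstance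

/-- A function `f : ℝ → E` is càdlàg on `[0,1]`: right-continuous at every `t ∈ [0,1)`
and with left limits at every `t ∈ (0,1]`. -/
def Cadlag {E : Type*} [TopologicalSpace E] (f : ℝ → E) : Prop :=
  (∀ t ∈ Set.Ico (0:ℝ) 1, Filter.Tendsto f (𝓝[>] t) (𝓝 (f t))) ∧
  (∀ t ∈ Set.Ioc (0:ℝ) 1, ∃ L, Filter.Tendsto f (𝓝[<] t) (𝓝 L))

/-- The set Λ of strictly increasing continuous maps of `[0,1]` onto itself. -/
def SkLambda : Set (ℝ → ℝ) :=
  {l | ContinuousOn l (Set.Icc 0 1) ∧ StrictMonoOn l (Set.Icc 0 1) ∧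
    l '' Set.Icc 0 1 = Set.Icc 0 1}

/-- The Skorohod pseudometric associated to a pseudometric `d` on `E`:
`d̃(x,y) = inf_{λ∈Λ} max( sup_t |λ t − t|, sup_t d (x (λ t)) (y t) )`. -/
noncomputable def skDist {E : Type*} (d : E → E → ℝ) (x y : ℝ → E) : ℝ :=
  sInf {r | ∃ l ∈ SkLambda,
    r = max (⨆ t : Set.Icc (0:ℝ) 1, |l t - (t : ℝ)|)
            (⨆ t : Set.Icc (0:ℝ) 1, d (x (l t)) (y t))}

/-- The Skorohod topology on a set `D` of functions `[0,1] → E` generated by the Skorohod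
pseudometrics associated to a family of pseudometrics on `E`. -/
noncomputable def skTop {E : Type*} {κ : Type*} (D : Set (ℝ → E)) (fam : κ → E → E → ℝ) :
    TopologicalSpace D :=
  ⨅ (k : κ) (x : D), TopologicalSpace.induced
    (fun y : D => skDist (fam k) (x : ℝ → E) (y : ℝ → E)) inferInstance

/-!
Fix a càdlàg path `y₀` and a continuous pseudometric `d`. A single member `ζ k` of a directed
generating family dominates `d` uniformly along `y₀`: `ζ k (y₀ s) b < δ → d (y₀ s) b < ε` for
all `s ∈ [0,1]`. Indeed a càdlàg path stays near `y₀ t` just right of `t` and near a left limit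
just left of `t`, so by compactness of `[0,1]` its range is covered by finitely many `ζ`-balls.
Hence `ζ̃ k y₀ y < δ` forces `d̃ y₀ y ≤ ε` (with the same time change), and by the triangle
inequality and symmetry of `d̃` each `y ↦ d̃ x y` is continuous for the `ζ̃`-topology.
Exchanging the two families gives the reverse inclusion.
-/

section Pseudometric

variable {E : Type*} {ρ : E → E → ℝ}

theorem IsPseudometric.abs_sub_le (hρ : IsPseudometric ρ) (c a x : E) :
    |ρ c x - ρ c a| ≤ ρ a x := by
  have hcax := hρ.2.2 c a x
  have hcxa := hρ.2.2 c x a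
  rw [hρ.2.1 x a] at hcxa
  exact abs_sub_le_iff.2 ⟨by linarith, by linarith⟩

theorem continuous_of_eq_pseudoTop {ι : Type*} [tE : TopologicalSpace E] {d : ι → E → E → ℝ}
    (ht : tE = pseudoTop d) (i : ι) (a : E) : Continuous (d i a) := by
  rw [continuous_iff_le_induced, ht]
  exact (iInf_le _ i).trans (iInf_le _ a)

variable {J : Type*} [Nonempty J] {ζ : J → E → E → ℝ}

theorem exists_ball_subset_of_mem_nhds [tE : TopologicalSpace E]
    (hζ : ∀ j, IsPseudometric (ζ j))
    (hdir : ∀ j j', ∃ k, ∀ a b, max (ζ j a b) (ζ j' a b) ≤ ζ k a b)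
    (ht : tE = pseudoTop ζ) {a : E} {W : Set E} (hW : W ∈ 𝓝 a) :
    ∃ k, ∃ δ > 0, {x | ζ k a x < δ} ⊆ W := by
  let ball : J × Ioi (0:ℝ) → Set E := fun p => {x | ζ p.1 a x < p.2}
  have hdirected : Directed (· ≥ ·) fun p => 𝓟 (ball p) := by
    rintro ⟨j, r⟩ ⟨j', r'⟩
    obtain ⟨k, hk⟩ := hdir j j'
    refine ⟨(k, ⟨min r r', mem_Ioi.2 (lt_min r.2 r'.2)⟩), principal_mono.2 fun x hx => ?_,
      principal_mono.2 fun x hx => ?_⟩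
    · exact ((le_max_left _ _).trans (hk a x)).trans_lt (hx.trans_le (min_le_left _ _))
    · exact ((le_max_right _ _).trans (hk a x)).trans_lt (hx.trans_le (min_le_right _ _))
  have hle : ⨅ p, 𝓟 (ball p) ≤ 𝓝 a := by
    rw [ht, pseudoTop, nhds_iInf]
    refine le_iInf fun j => ?_
    rw [nhds_iInf]
    refine le_iInf fun c => ?_
    rw [nhds_induced]
    intro U hU
    obtain ⟨V, hV, hVU⟩ := mem_comap.1 hU
    obtain ⟨r, hr, hrV⟩ := Metric.mem_nhds_iff.1 hV
    refine mem_iInf_of_mem (j, ⟨r, hr⟩) (mem_principal.2 fun x hx => hVU (hrV ?_))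
    rw [Metric.mem_ball, Real.dist_eq]
    exact ((hζ j).abs_sub_le c a x).trans_lt hx
  obtain ⟨⟨k, δ⟩, hk⟩ := (mem_iInf_of_directed hdirected W).1 (hle hW)
  exact ⟨k, δ, δ.2, mem_principal.1 hk⟩

theorem exists_forall_lt_imp_lt
    (hdir : ∀ j j', ∃ k, ∀ a b, max (ζ j a b) (ζ j' a b) ≤ ζ k a b)
    {α : Type*} (A : Finset α) (k : α → J) (δ : α → ℝ) (hδ : ∀ a ∈ A, 0 < δ a) :
    ∃ k₀, ∃ δ₀ > 0, ∀ a ∈ A, ∀ u v, ζ k₀ u v < δ₀ → ζ (k a) u v < δ a := by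
  classical
  induction A using Finset.induction with
  | empty => exact ⟨Classical.arbitrary J, 1, one_pos, by simp⟩
  | @insert a A _ ih =>
    obtain ⟨k₀, δ₀, hδ₀, hA⟩ := ih fun b hb => hδ b (Finset.mem_insert_of_mem hb)
    obtain ⟨k₁, hk₁⟩ := hdir (k a) k₀
    refine ⟨k₁, min δ₀ (δ a), lt_min hδ₀ (hδ a (Finset.mem_insert_self a A)), ?_⟩
    intro b hb u v huv
    rcases Finset.mem_insert.1 hb with rfl | hb
    · exact ((le_max_left _ _).trans (hk₁ u v)).trans_lt (huv.trans_le (min_le_right _ _))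
    · exact hA b hb u v (((le_max_right _ _).trans (hk₁ u v)).trans_lt
        (huv.trans_le (min_le_left _ _)))

end Pseudometric

section Cadlag

variable {E : Type*} [tE : TopologicalSpace E] {f : ℝ → E}

theorem Cadlag.continuousWithinAt_Ici (hf : Cadlag f) {t : ℝ} (ht : t ∈ Icc (0:ℝ) 1) :
    ContinuousWithinAt f (Icc 0 1 ∩ Ici t) t := by
  rcases ht.2.lt_or_eq with ht1 | rfl
  · exact (continuousWithinAt_Ioi_iff_Ici.1 (hf.1 t ⟨ht.1, ht1⟩)).mono inter_subset_right
  · exact continuousWithinAt_singleton.mono fun s hs => le_antisymm hs.1.2 hs.2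

theorem Cadlag.exists_tendsto_Iio (hf : Cadlag f) {t : ℝ} (ht : t ∈ Icc (0:ℝ) 1) :
    ∃ L, Tendsto f (𝓝[Icc 0 1 ∩ Iio t] t) (𝓝 L) := by
  rcases ht.1.lt_or_eq with ht0 | rfl
  · obtain ⟨L, hL⟩ := hf.2 t ⟨ht0, ht.2⟩
    exact ⟨L, hL.mono_left (nhdsWithin_mono _ inter_subset_right)⟩
  · refine ⟨f 0, ?_⟩
    rw [show Icc (0:ℝ) 1 ∩ Iio 0 = ∅ from eq_empty_of_forall_notMem fun s hs =>
      hs.2.not_ge hs.1.1, nhdsWithin_empty]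
    exact tendsto_bot

theorem Cadlag.exists_finset_cover (hf : Cadlag f) {W : E → Set E} (hW : ∀ a, W a ∈ 𝓝 a) :
    ∃ A : Finset E, ∀ s ∈ Icc (0:ℝ) 1, ∃ a ∈ A, f s ∈ W a := by
  classical
  have : Nonempty E := ⟨f 0⟩
  choose! L hL using fun t (ht : t ∈ Icc (0:ℝ) 1) => hf.exists_tendsto_Iio ht
  have hlocal : ∀ t ∈ Icc (0:ℝ) 1, f ⁻¹' (W (L t) ∪ W (f t)) ∈ 𝓝[Icc 0 1] t := by
    intro t ht
    rw [← inter_univ (Icc (0:ℝ) 1), ← Iio_union_Ici (a := t), inter_union_distrib_left,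
      nhdsWithin_union]
    exact mem_sup.2 ⟨mem_of_superset (hL t ht (hW _)) (preimage_mono subset_union_left),
      mem_of_superset (hf.continuousWithinAt_Ici ht (hW _)) (preimage_mono subset_union_right)⟩
  obtain ⟨T, -, hT⟩ := isCompact_Icc.elim_nhdsWithin_subcover _ hlocal
  refine ⟨T.biUnion fun t => {L t, f t}, fun s hs => ?_⟩
  obtain ⟨t, htT, hst⟩ := mem_iUnion₂.1 (hT hs)
  rcases hst with hst | hst
  · exact ⟨L t, Finset.mem_biUnion.2 ⟨t, htT, by simp⟩, hst⟩
  · exact ⟨f t, Finset.mem_biUnion.2 ⟨t, htT, by simp⟩, hst⟩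

theorem Cadlag.exists_bound_comp (hf : Cadlag f) {g : E → ℝ} (hg : Continuous g) :
    ∃ M, ∀ s ∈ Icc (0:ℝ) 1, g (f s) ≤ M := by
  obtain ⟨A, hA⟩ := hf.exists_finset_cover (W := fun a => g ⁻¹' Iio (g a + 1))
    fun a => (hg.isOpen_preimage _ isOpen_Iio).mem_nhds (by simp)
  obtain ⟨M, hM⟩ := (A.finite_toSet.image fun a => g a + 1).bddAbove
  refine ⟨M, fun s hs => ?_⟩
  obtain ⟨a, ha, hfs⟩ := hA s hs
  exact (mem_Iio.1 hfs).le.trans (hM ⟨a, ha, rfl⟩)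

variable {ρ : E → E → ℝ}

theorem IsPseudometric.exists_bound_cadlag (hρ : IsPseudometric ρ)
    (hρc : ∀ a, Continuous (ρ a)) {x y : ℝ → E} (hx : Cadlag x) (hy : Cadlag y) :
    ∃ M, ∀ s ∈ Icc (0:ℝ) 1, ∀ u ∈ Icc (0:ℝ) 1, ρ (x s) (y u) ≤ M := by
  obtain ⟨Mx, hMx⟩ := hx.exists_bound_comp (hρc (x 0))
  obtain ⟨My, hMy⟩ := hy.exists_bound_comp (hρc (x 0))
  refine ⟨Mx + My, fun s hs u hu => ?_⟩
  have htri := hρ.2.2 (x s) (x 0) (y u)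
  rw [hρ.2.1 (x s) (x 0)] at htri
  linarith [hMx s hs, hMy u hu]

variable {J : Type*} [Nonempty J] {ζ : J → E → E → ℝ}

theorem Cadlag.exists_uniform_lt_imp_lt (hf : Cadlag f) (hζ : ∀ j, IsPseudometric (ζ j))
    (hdir : ∀ j j', ∃ k, ∀ a b, max (ζ j a b) (ζ j' a b) ≤ ζ k a b)
    (ht : tE = pseudoTop ζ) (hρ : IsPseudometric ρ)
    (hρc : ∀ a, Continuous (ρ a)) {ε : ℝ} (hε : 0 < ε) :
    ∃ k, ∃ δ > 0, ∀ s ∈ Icc (0:ℝ) 1, ∀ b, ζ k (f s) b < δ → ρ (f s) b < ε := by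
  have hball : ∀ a, ∃ k, ∃ δ > 0, {b | ζ k a b < δ} ⊆ {b | ρ a b < ε / 2} := fun a =>
    exists_ball_subset_of_mem_nhds hζ hdir ht <|
      (isOpen_lt (hρc a) continuous_const).mem_nhds (by simp [hρ.1 a, hε])
  choose k δ hδ hkδ using hball
  obtain ⟨A, hA⟩ := hf.exists_finset_cover (W := fun a => {b | ζ (k a) a b < δ a / 2})
    fun a => (isOpen_lt (continuous_of_eq_pseudoTop ht _ a) continuous_const).mem_nhds
      (by simp [(hζ _).1 a, hδ a])
  obtain ⟨k₀, δ₀, hδ₀, hk₀⟩ := exists_forall_lt_imp_lt hdir A k (fun a => δ a / 2)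
    fun a _ => half_pos (hδ a)
  refine ⟨k₀, δ₀, hδ₀, fun s hs b hb => ?_⟩
  obtain ⟨a, ha, has : ζ (k a) a (f s) < δ a / 2⟩ := hA s hs
  have hsb : ζ (k a) (f s) b < δ a / 2 := hk₀ a ha _ _ hb
  have hab : ρ a b < ε / 2 :=
    hkδ a (show ζ (k a) a b < δ a by linarith [(hζ (k a)).2.2 a (f s) b])
  have has' : ρ a (f s) < ε / 2 := hkδ a (show ζ (k a) a (f s) < δ a by linarith [hδ a])
  linarith [hρ.2.2 (f s) a b, hρ.2.1 (f s) a]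

end Cadlag

namespace SkLambda

theorem id_mem : (fun t : ℝ => t) ∈ SkLambda :=
  ⟨continuousOn_id, fun _ _ _ _ h => h, image_id _⟩

variable {l l' : ℝ → ℝ}

theorem mapsTo (hl : l ∈ SkLambda) : MapsTo l (Icc 0 1) (Icc 0 1) :=
  fun _ ht => hl.2.2 ▸ mem_image_of_mem l ht

theorem comp_mem (hl : l ∈ SkLambda) (hl' : l' ∈ SkLambda) : (fun t => l (l' t)) ∈ SkLambda :=
  ⟨hl.1.comp hl'.1 (mapsTo hl'), hl.2.1.comp hl'.2.1 (mapsTo hl'), by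
    rw [← image_image, hl'.2.2, hl.2.2]⟩

noncomputable def orderIso (hl : l ∈ SkLambda) : Icc (0:ℝ) 1 ≃o Icc (0:ℝ) 1 :=
  StrictMono.orderIsoOfSurjective ((mapsTo hl).restrict l _ _)
    (fun _ _ h => hl.2.1 (Subtype.prop _) (Subtype.prop _) h) <| by
      rintro ⟨s, hs⟩
      obtain ⟨t, ht, rfl⟩ := (hl.2.2.symm ▸ hs : s ∈ l '' Icc 0 1)
      exact ⟨⟨t, ht⟩, rfl⟩

@[simp]
theorem coe_orderIso_apply (hl : l ∈ SkLambda) (t : Icc (0:ℝ) 1) :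
    (orderIso hl t : ℝ) = l t :=
  congrArg Subtype.val (congrFun (StrictMono.coe_orderIsoOfSurjective _ _ _) t)

theorem IccExtend_orderIso_mem (e : Icc (0:ℝ) 1 ≃o Icc (0:ℝ) 1) :
    IccExtend zero_le_one (fun t => (e t : ℝ)) ∈ SkLambda := by
  refine ⟨(continuous_IccExtend_iff.2 (continuous_subtype_val.comp
    e.toHomeomorph.continuous)).continuousOn, fun a ha b hb hab => ?_, ?_⟩
  · rw [IccExtend_of_mem _ _ ha, IccExtend_of_mem _ _ hb]
    exact e.strictMono (Subtype.mk_lt_mk.2 hab)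
  · ext s
    refine ⟨?_, fun hs => ⟨e.symm ⟨s, hs⟩, (e.symm ⟨s, hs⟩).2, by simp [IccExtend_val]⟩⟩
    rintro ⟨t, ht, rfl⟩
    rw [IccExtend_of_mem _ _ ht]
    exact (e _).2

end SkLambda

section SkDist

variable {E : Type*} {ρ : E → E → ℝ} {x y z : ℝ → E}

theorem skDist_nonneg : 0 ≤ skDist ρ x y := by
  refine Real.sInf_nonneg ?_
  rintro r ⟨l, _, rfl⟩
  exact (Real.iSup_nonneg fun t => abs_nonneg _).trans (le_max_left _ _)

theorem skDist_le_of_forall {l : ℝ → ℝ} (hl : l ∈ SkLambda) {b : ℝ}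
    (h : ∀ t ∈ Icc (0:ℝ) 1, |l t - t| ≤ b ∧ ρ (x (l t)) (y t) ≤ b) : skDist ρ x y ≤ b := by
  have hbdd : BddBelow {r | ∃ l ∈ SkLambda, r = max (⨆ t : Icc (0:ℝ) 1, |l t - t|)
      (⨆ t : Icc (0:ℝ) 1, ρ (x (l t)) (y t))} := by
    refine ⟨0, ?_⟩
    rintro r ⟨l', _, rfl⟩
    exact (Real.iSup_nonneg fun t => abs_nonneg _).trans (le_max_left _ _)
  refine (csInf_le hbdd ⟨l, hl, rfl⟩).trans (max_le ?_ ?_)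
  · exact ciSup_le fun t : Icc (0:ℝ) 1 => (h t t.2).1
  · exact ciSup_le fun t : Icc (0:ℝ) 1 => (h t t.2).2

/-- `⨆` of an unbounded real family is `0`, so without the bound `hb` a small `skDist` would
say nothing pointwise. -/
theorem exists_timeChange_of_skDist_lt
    (hb : ∃ M, ∀ s ∈ Icc (0:ℝ) 1, ∀ u ∈ Icc (0:ℝ) 1, ρ (x s) (y u) ≤ M) {δ : ℝ}
    (h : skDist ρ x y < δ) :
    ∃ l ∈ SkLambda, ∀ t ∈ Icc (0:ℝ) 1, |l t - t| < δ ∧ ρ (x (l t)) (y t) < δ := by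
  obtain ⟨r, ⟨l, hl, rfl⟩, hr⟩ :=
    exists_lt_of_csInf_lt (by exact ⟨_, _, SkLambda.id_mem, rfl⟩) h
  obtain ⟨M, hM⟩ := hb
  have habs : BddAbove (range fun t : Icc (0:ℝ) 1 => |l t - t|) := by
    refine ⟨1, ?_⟩
    rintro _ ⟨t, rfl⟩
    have hlt := SkLambda.mapsTo hl t.2
    exact abs_sub_le_iff.2 ⟨by linarith [hlt.2, t.2.1], by linarith [hlt.1, t.2.2]⟩
  have hρ : BddAbove (range fun t : Icc (0:ℝ) 1 => ρ (x (l t)) (y t)) := by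
    refine ⟨M, ?_⟩
    rintro _ ⟨t, rfl⟩
    exact hM _ (SkLambda.mapsTo hl t.2) _ t.2
  exact ⟨l, hl, fun t ht =>
    ⟨((le_ciSup habs ⟨t, ht⟩).trans (le_max_left _ _)).trans_lt hr,
      ((le_ciSup hρ ⟨t, ht⟩).trans (le_max_right _ _)).trans_lt hr⟩⟩

theorem skDist_self (h0 : ∀ a, ρ a a = 0) (y : ℝ → E) : skDist ρ y y = 0 :=
  (skDist_le_of_forall SkLambda.id_mem fun t _ => by simp [h0]).antisymm skDist_nonneg

/-- Reindexing both suprema along `λ` turns the value of `λ` for `(x, y)` into the value of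
`λ⁻¹` for `(y, x)`. -/
theorem skDist_comm (hρ : ∀ a b, ρ a b = ρ b a) (x y : ℝ → E) : skDist ρ x y = skDist ρ y x := by
  suffices hsub : ∀ x y : ℝ → E, ∀ r, (∃ l ∈ SkLambda,
      r = max (⨆ t : Icc (0:ℝ) 1, |l t - t|) (⨆ t : Icc (0:ℝ) 1, ρ (x (l t)) (y t))) →
      ∃ l ∈ SkLambda,
      r = max (⨆ t : Icc (0:ℝ) 1, |l t - t|) (⨆ t : Icc (0:ℝ) 1, ρ (y (l t)) (x t)) from
    congrArg sInf (Set.ext fun r => ⟨hsub x y r, hsub y x r⟩)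
  rintro x y r ⟨l, hl, rfl⟩
  set e := SkLambda.orderIso hl
  refine ⟨_, SkLambda.IccExtend_orderIso_mem e.symm, ?_⟩
  have hinv : ∀ s, IccExtend zero_le_one (fun t => (e.symm t : ℝ)) (e s) = s := fun s => by
    rw [IccExtend_val, e.symm_apply_apply]
  congr 1
  · conv_rhs => rw [← e.surjective.iSup_comp]
    exact iSup_congr fun s => by rw [hinv, SkLambda.coe_orderIso_apply, abs_sub_comm]
  · conv_rhs => rw [← e.surjective.iSup_comp]
    exact iSup_congr fun s => by rw [hinv, SkLambda.coe_orderIso_apply, hρ]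

theorem skDist_triangle (hρ : IsPseudometric ρ)
    (hxy : ∃ M, ∀ s ∈ Icc (0:ℝ) 1, ∀ u ∈ Icc (0:ℝ) 1, ρ (x s) (y u) ≤ M)
    (hyz : ∃ M, ∀ s ∈ Icc (0:ℝ) 1, ∀ u ∈ Icc (0:ℝ) 1, ρ (y s) (z u) ≤ M) :
    skDist ρ x z ≤ skDist ρ x y + skDist ρ y z := by
  refine le_of_forall_pos_le_add fun ε hε => ?_
  obtain ⟨l₁, hl₁, h₁⟩ := exists_timeChange_of_skDist_lt hxy
    (lt_add_of_pos_right (skDist ρ x y) (half_pos hε))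
  obtain ⟨l₂, hl₂, h₂⟩ := exists_timeChange_of_skDist_lt hyz
    (lt_add_of_pos_right (skDist ρ y z) (half_pos hε))
  refine skDist_le_of_forall (SkLambda.comp_mem hl₁ hl₂) fun t ht => ?_
  obtain ⟨h₁t, h₁ρ⟩ := h₁ _ (SkLambda.mapsTo hl₂ ht)
  obtain ⟨h₂t, h₂ρ⟩ := h₂ t ht
  constructor
  · linarith [abs_sub_le (l₁ (l₂ t)) (l₂ t) t]
  · linarith [hρ.2.2 (x (l₁ (l₂ t))) (y (l₂ t)) (z t)]

end SkDist

theorem continuous_skDist_skTop {E κ : Type*} (D : Set (ℝ → E)) (fam : κ → E → E → ℝ) (k : κ)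
    (x : D) : Continuous[skTop D fam, _] fun y : D => skDist (fam k) x y :=
  continuous_iff_le_induced.2 ((iInf_le _ k).trans (iInf_le _ x))

section SkTop

variable {E : Type*} [tE : TopologicalSpace E] {ρ : E → E → ℝ} {x y z : ℝ → E}

theorem abs_skDist_sub_skDist_le (hρ : IsPseudometric ρ) (hρc : ∀ a, Continuous (ρ a))
    (hx : Cadlag x) (hy : Cadlag y) (hz : Cadlag z) :
    |skDist ρ x y - skDist ρ x z| ≤ skDist ρ z y := by
  have hbound := fun {u v : ℝ → E} (hu : Cadlag u) (hv : Cadlag v) =>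
    hρ.exists_bound_cadlag hρc hu hv
  have hxzy := skDist_triangle hρ (hbound hx hz) (hbound hz hy)
  have hxyz := skDist_triangle hρ (hbound hx hy) (hbound hy hz)
  rw [skDist_comm hρ.2.1 y z] at hxyz
  exact abs_sub_le_iff.2 ⟨by linarith, by linarith⟩

theorem skDist_le_of_skDist_lt {σ : E → E → ℝ} (hσ : IsPseudometric σ)
    (hσc : ∀ a, Continuous (σ a)) (hx : Cadlag x) (hy : Cadlag y) {δ ε : ℝ}
    (hdom : ∀ s ∈ Icc (0:ℝ) 1, ∀ b, σ (x s) b < δ → ρ (x s) b < ε)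
    (h : skDist σ x y < min δ ε) : skDist ρ x y ≤ ε := by
  obtain ⟨l, hl, hlt⟩ := exists_timeChange_of_skDist_lt (hσ.exists_bound_cadlag hσc hx hy) h
  refine skDist_le_of_forall hl fun t ht => ⟨((hlt t ht).1.trans_le (min_le_right _ _)).le, ?_⟩
  exact (hdom _ (SkLambda.mapsTo hl ht) _ ((hlt t ht).2.trans_le (min_le_left _ _))).le

theorem skTop_le_skTop {I J : Type*} [Nonempty J] {d : I → E → E → ℝ} {ζ : J → E → E → ℝ}
    (hd : ∀ i, IsPseudometric (d i)) (hdc : ∀ i a, Continuous (d i a))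
    (hζ : ∀ j, IsPseudometric (ζ j))
    (hζdir : ∀ j j', ∃ k, ∀ a b, max (ζ j a b) (ζ j' a b) ≤ ζ k a b)
    (htζ : tE = pseudoTop ζ) :
    skTop {f : ℝ → E | Cadlag f} ζ ≤ skTop {f : ℝ → E | Cadlag f} d := by
  refine le_iInf₂ fun i x => continuous_iff_le_induced.1 ?_
  let := skTop {f : ℝ → E | Cadlag f} ζ
  refine continuous_iff_continuousAt.2 fun y₀ => Metric.tendsto_nhds.2 fun ε hε => ?_
  obtain ⟨k, δ, hδ, hdom⟩ := Cadlag.exists_uniform_lt_imp_lt y₀.2 hζ hζdir htζ (hd i) (hdc i)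
    (half_pos hε)
  have hnhds : {y : {f : ℝ → E | Cadlag f} | skDist (ζ k) y₀ y < min δ (ε / 2)} ∈ 𝓝 y₀ :=
    (isOpen_lt (continuous_skDist_skTop _ ζ k y₀) continuous_const).mem_nhds
      (by simp [skDist_self (hζ k).1, hδ, hε])
  filter_upwards [hnhds] with y hy
  have hclose := skDist_le_of_skDist_lt (hζ k) (continuous_of_eq_pseudoTop htζ k) y₀.2 y.2
    hdom hy
  rw [Real.dist_eq]
  exact (abs_skDist_sub_skDist_le (hd i) (hdc i) x.2 y.2 y₀.2).trans_lt (by linarith)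

end SkTop

theorem subsingleton_of_separating_of_isEmpty {E ι : Type*} [IsEmpty ι] {d : ι → E → E → ℝ}
    (hsep : ∀ a b : E, a ≠ b → ∃ i, 0 < d i a b) : Subsingleton E :=
  ⟨fun a b => by_contra fun hab => isEmptyElim (hsep a b hab).choose⟩

theorem TopologicalSpace.eq_of_subsingleton {X : Type*} [Subsingleton X]
    (t₁ t₂ : TopologicalSpace X) : t₁ = t₂ :=
  (@Subsingleton.discreteTopology X t₁ _).eq_bot.trans
    (@Subsingleton.discreteTopology X t₂ _).eq_bot.symm

theorem skorohod_topology_well_defined_general {E : Type*} {I J : Type*}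
    [tE : TopologicalSpace E]
    (d : I → E → E → ℝ) (ζ : J → E → E → ℝ)
    (hd : ∀ i, IsPseudometric (d i)) (hζ : ∀ j, IsPseudometric (ζ j))
    (hdsep : ∀ a b : E, a ≠ b → ∃ i, 0 < d i a b)
    (hζsep : ∀ a b : E, a ≠ b → ∃ j, 0 < ζ j a b)
    (hddir : ∀ i i', ∃ k, ∀ a b, max (d i a b) (d i' a b) ≤ d k a b)
    (hζdir : ∀ j j', ∃ k, ∀ a b, max (ζ j a b) (ζ j' a b) ≤ ζ k a b)
    (htd : tE = pseudoTop d) (htζ : tE = pseudoTop ζ) :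
    skTop {f : ℝ → E | Cadlag f} d = skTop {f : ℝ → E | Cadlag f} ζ := by
  rcases isEmpty_or_nonempty I with hI | hI
  · have := subsingleton_of_separating_of_isEmpty hdsep
    exact TopologicalSpace.eq_of_subsingleton _ _
  rcases isEmpty_or_nonempty J with hJ | hJ
  · have := subsingleton_of_separating_of_isEmpty hζsep
    exact TopologicalSpace.eq_of_subsingleton _ _
  exact le_antisymm
    (skTop_le_skTop hζ (continuous_of_eq_pseudoTop htζ) hd hddir htd)
    (skTop_le_skTop hd (continuous_of_eq_pseudoTop htd) hζ hζdir htζ)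

/-- Jakubowski's theorem: if the topology of a completely regular space `E` is generated
by two separating, directed families of pseudometrics `{d i}` and `{ζ j}`, then the
corresponding families of Skorohod pseudometrics generate the same topology on the space
`D([0,1],E)` of càdlàg functions. The Skorohod topology depends only on the topology of
`E`. -/
theorem skorohod_topology_well_defined {E : Type*} {I J : Type*}
    [tE : TopologicalSpace E] [CompletelyRegularSpace E]
    (d : I → E → E → ℝ) (ζ : J → E → E → ℝ)
    (hd : ∀ i, IsPseudometric (d i)) (hζ : ∀ j, IsPseudometric (ζ j))
    (hdsep : ∀ a b : E, a ≠ b → ∃ i, 0 < d i a b)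
    (hζsep : ∀ a b : E, a ≠ b → ∃ j, 0 < ζ j a b)
    (hddir : ∀ i i', ∃ k, ∀ a b, max (d i a b) (d i' a b) ≤ d k a b)
    (hζdir : ∀ j j', ∃ k, ∀ a b, max (ζ j a b) (ζ j' a b) ≤ ζ k a b)
    (htd : tE = pseudoTop d) (htζ : tE = pseudoTop ζ) :
    skTop {f : ℝ → E | Cadlag f} d = skTop {f : ℝ → E | Cadlag f} ζ :=
  skorohod_topology_well_defined_general (tE := tE) d ζ hd hζ hdsep hζsep hddir hζdir htd htζ
end
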